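/- If the Banach algebra A_Φ(G)** (with the first Arens product) is semi-simple, then UCB_Ψ(Ĝ) = PM_Ψ(G). -/

import Mathlib

open MeasureTheory Filter Topology NormedSpace
open scoped ENNReal ZeroAtInfty

noncomputable section

/-! ### Young functions and the Δ₂ and MA conditions -/

/-- A (real-valued, continuous) Young function. -/
structure IsYoungFunction (Φ : ℝ → ℝ) : Prop where
  even : ∀ x, Φ (-x) = Φ x
  convexOn : ConvexOn ℝ Set.univ Φ
  nonneg : ∀ x, 0 ≤ Φ x
  map_zero : Φ 0 = 0
  continuous : Continuous Φ
  tendsto_atTop : Tendsto Φ atTop atTop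

/-- `(Φ, Ψ)` is a complementary pair of Young functions:
`Ψ y = sup { x * |y| - Φ x : x ≥ 0 }`. -/
def IsComplementaryYoungPair (Φ Ψ : ℝ → ℝ) : Prop :=
  IsYoungFunction Φ ∧ IsYoungFunction Ψ ∧
    ∀ y, Ψ y = sSup {z | ∃ x ≥ (0 : ℝ), z = x * |y| - Φ x}

/-- The Δ₂-condition for a Young function. -/
def HasDeltaTwo (Φ : ℝ → ℝ) : Prop :=
  ∃ k > (0 : ℝ), ∃ x₀ ≥ (0 : ℝ), ∀ x ≥ x₀, Φ (2 * x) ≤ k * Φ x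

/-- The Milnes–Akimonič (MA) condition for a Young function. -/
def HasMACondition (Φ : ℝ → ℝ) : Prop :=
  ∀ ε > (0 : ℝ), ∃ β > (1 : ℝ), ∃ x₀ ≥ (0 : ℝ), ∀ x ≥ x₀,
    β * deriv Φ x ≤ deriv Φ ((1 + ε) * x)

/-! ### Orlicz spaces -/

section Orlicz

variable {G : Type*} [MeasurableSpace G]

/-- Membership in the Orlicz space `L^Φ(G)`. -/
def MemOrlicz (Φ : ℝ → ℝ) (μ : Measure G) (f : G → ℂ) : Prop :=
  AEStronglyMeasurable f μ ∧ ∃ β > (0 : ℝ), ∫⁻ x, ENNReal.ofReal (Φ (β * ‖f x‖)) ∂μ < ⊤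

/-- The Luxemburg (gauge) norm `N_Φ(f)` on `L^Φ(G)`. -/
def luxemburgNorm (Φ : ℝ → ℝ) (μ : Measure G) (f : G → ℂ) : ℝ :=
  sInf {k | 0 < k ∧ ∫⁻ x, ENNReal.ofReal (Φ (‖f x‖ / k)) ∂μ ≤ 1}

/-- The Orlicz norm `‖f‖_Φ`, where `Ψ` is the Young function complementary to `Φ`. -/
def orliczNorm (Φ Ψ : ℝ → ℝ) (μ : Measure G) (f : G → ℂ) : ℝ :=
  sSup {r | ∃ g : G → ℂ, (∫⁻ x, ENNReal.ofReal (Ψ (‖g x‖)) ∂μ ≤ 1) ∧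
    r = ∫ x, ‖f x‖ * ‖g x‖ ∂μ}

end Orlicz

/-! ### The Orlicz Figà-Talamanca Herz algebra `A_Φ(G)` -/

section Aphi

variable {G : Type*} [MeasurableSpace G] [Group G] [TopologicalSpace G]

/-- `f, g` give an admissible representation `u = ∑' n, f n ⋆ (g n)ᵛ` of `u` for `A_Φ(G)`,
where `ǧ x = g x⁻¹`, so that `(f ⋆ ǧ) x = ∫ y, f y * g (x⁻¹ * y)`. -/
def IsAphiDecomposition (μ : Measure G) (Φ Ψ : ℝ → ℝ) (u : G → ℂ)
    (f g : ℕ → G → ℂ) : Prop :=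
  (∀ n, MemOrlicz Φ μ (f n)) ∧ (∀ n, MemOrlicz Ψ μ (g n)) ∧
    Summable (fun n => luxemburgNorm Φ μ (f n) * orliczNorm Ψ Φ μ (g n)) ∧
    ∀ x, u x = ∑' n, ∫ y, f n y * g n (x⁻¹ * y) ∂μ

/-- Membership in `A_Φ(G)` for an element of `C₀(G, ℂ)`. -/
def MemAphi (μ : Measure G) (Φ Ψ : ℝ → ℝ) (u : C₀(G, ℂ)) : Prop :=
  ∃ f g, IsAphiDecomposition μ Φ Ψ (⇑u) f g

/-- The norm of `A_Φ(G)`. -/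
def aphiNorm (μ : Measure G) (Φ Ψ : ℝ → ℝ) (u : C₀(G, ℂ)) : ℝ :=
  sInf {r | ∃ f g, IsAphiDecomposition μ Φ Ψ (⇑u) f g ∧
    r = ∑' n, luxemburgNorm Φ μ (f n) * orliczNorm Ψ Φ μ (g n)}

/-- `A`, together with the embedding `ι : A → C₀(G, ℂ)`, *is* the Orlicz
Figà-Talamanca Herz algebra `A_Φ(G)`: a commutative Banach algebra of
`C₀`-functions (with pointwise operations) whose members are exactly the functions
admitting an `A_Φ`-decomposition, and carrying the `A_Φ(G)`-norm. -/
structure IsOrliczFigaTalamancaHerzAlgebra (μ : Measure G) (Φ Ψ : ℝ → ℝ)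
    (A : Type*) [NonUnitalNormedCommRing A] [NormedSpace ℂ A]
    (ι : A → C₀(G, ℂ)) : Prop where
  injective : Function.Injective ι
  map_add : ∀ a b, ι (a + b) = ι a + ι b
  map_smul : ∀ (c : ℂ) (a), ι (c • a) = c • ι a
  map_mul : ∀ a b, ι (a * b) = ι a * ι b
  mem_range_iff : ∀ u, (∃ a, ι a = u) ↔ MemAphi μ Φ Ψ u
  norm_eq : ∀ a, ‖a‖ = aphiNorm μ Φ Ψ (ι a)

end Aphi

/-! ### The first Arens product on the double dual of a Banach algebra -/

section Arens

variable (A : Type*) [NonUnitalNormedRing A] [NormedSpace ℂ A]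
  [SMulCommClass ℂ A A] [IsScalarTower ℂ A A]

open ContinuousLinearMap in
/-- The module action `u • T` of `A` on its dual: `⟨u • T, v⟩ = ⟨T, u * v⟩`. -/
def dotAct (u : A) (T : StrongDual ℂ A) : StrongDual ℂ A :=
  T.comp (ContinuousLinearMap.mul ℂ A u)

open ContinuousLinearMap in
/-- The action `dotAct` as a continuous bilinear map, `(T, u) ↦ u • T`. -/
def dotActR : StrongDual ℂ A →L[ℂ] A →L[ℂ] StrongDual ℂ A :=
  ((compL ℂ A (A →L[ℂ] A) (StrongDual ℂ A)).flip (ContinuousLinearMap.mul ℂ A)).comp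
    (compL ℂ A A ℂ)

open ContinuousLinearMap in
/-- The operation `Γ ⊙ T` on `A** × A*`: `⟨Γ ⊙ T, u⟩ = ⟨Γ, u • T⟩`. -/
def arensOdot : StrongDual ℂ (StrongDual ℂ A) →L[ℂ] StrongDual ℂ A →L[ℂ] StrongDual ℂ A :=
  ((@ContinuousLinearMap.flip _ _ _ _ _ _ _ ContinuousLinearMap.toSeminormedAddCommGroup _ _ _ _ _
    ContinuousLinearMap.toNormedSpace _ _ _ _ _
    (compL ℂ (StrongDual ℂ A) (A →L[ℂ] StrongDual ℂ A) (StrongDual ℂ A))) (dotActR A)).comp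
    (compL ℂ A (StrongDual ℂ A) ℂ)

/-- The first Arens product `Γ' □ Γ` on the double dual `A**`:
`⟨Γ' □ Γ, T⟩ = ⟨Γ', Γ ⊙ T⟩`. -/
def arens (Γ' Γ : StrongDual ℂ (StrongDual ℂ A)) : StrongDual ℂ (StrongDual ℂ A) :=
  Γ'.comp (arensOdot A Γ)

/-- The space `UCB_Ψ(Ĝ) = A* ⬝ A`: the norm closure in `A*` of the linear span of
`{u • T : u ∈ A, T ∈ A*}`. -/
def UCBSubmodule : Submodule ℂ (StrongDual ℂ A) :=
  (Submodule.span ℂ {T | ∃ (u : A) (S : StrongDual ℂ A), T = dotAct A u S}).topologicalClosure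

variable {A} in
theorem dotAct_mem_UCBSubmodule (u : A) (S : StrongDual ℂ A) :
    dotAct A u S ∈ UCBSubmodule A :=
  Submodule.le_topologicalClosure _ (Submodule.subset_span ⟨u, S, rfl⟩)

variable {A} in
/-- The restriction of `Γ ∈ A**` to the subspace `UCB_Ψ(Ĝ) ⊆ A*`. -/
def restrictToUCB (Γ : StrongDual ℂ (StrongDual ℂ A)) : StrongDual ℂ ↥(UCBSubmodule A) :=
  Γ.comp (UCBSubmodule A).subtypeL

end Arens

/-! ### Dual maps, supports, radicals, topological centres, amenability -/

/-- The adjoint (dual map) of a continuous linear map. -/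
def dualMapL {E F : Type*} [NormedAddCommGroup E] [NormedSpace ℂ E]
    [NormedAddCommGroup F] [NormedSpace ℂ F] (m : E →L[ℂ] F) :
    StrongDual ℂ F →L[ℂ] StrongDual ℂ E :=
  (ContinuousLinearMap.compL ℂ E F ℂ).flip m

section Support

variable {G : Type*} [TopologicalSpace G] {A : Type*} [NonUnitalNormedCommRing A]
  [NormedSpace ℂ A]

/-- The support of a functional `T ∈ A* = PM_Ψ(G)`: `x ∉ supp T` iff there is a
neighbourhood `V` of `x` such that `⟨T, v⟩ = 0` for all `v ∈ A` supported in `V`. -/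
def pmSupport (ι : A → C₀(G, ℂ)) (T : StrongDual ℂ A) : Set G :=
  {x | ∀ V ∈ nhds x, ∃ a : A, tsupport ⇑(ι a) ⊆ V ∧ T a ≠ 0}

end Support

/-- `z` is left quasi-regular with respect to the multiplication `mul`:
there is `b` with `b + z + b * z = 0` (i.e. `1 + z` has a left inverse `1 + b`
in the unitization). -/
def IsLeftQuasiRegularWith {R : Type*} [AddCommGroup R] (mul : R → R → R) (z : R) : Prop :=
  ∃ b, b + z + mul b z = 0

/-- Membership in the Jacobson radical of the (possibly non-unital) ring `(R, +, mul)`: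
every element of the right ideal generated by `a` is left quasi-regular. -/
def MemJacobsonRadicalWith {R : Type*} [AddCommGroup R] (mul : R → R → R) (a : R) : Prop :=
  ∀ (x : R) (n : ℤ), IsLeftQuasiRegularWith mul (mul a x + n • a)

/-- The (possibly non-unital) ring `(R, +, mul)` is semi-simple: its Jacobson radical
is `{0}`. -/
def IsSemisimpleWith {R : Type*} [AddCommGroup R] (mul : R → R → R) : Prop :=
  ∀ a, MemJacobsonRadicalWith mul a → a = 0

/-- The topological centre of the dual of `E` with respect to a product `mul` on the
dual: the set of all `m` such that `m' ↦ mul m m'` is `w*`-`w*`-continuous. -/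
def topCenterWith {E : Type*} [NormedAddCommGroup E] [NormedSpace ℂ E]
    (mul : StrongDual ℂ E → StrongDual ℂ E → StrongDual ℂ E) : Set (StrongDual ℂ E) :=
  {m | Continuous fun m' : WeakDual ℂ E =>
    StrongDual.toWeakDual (mul m (WeakDual.toStrongDual m'))}

section Amenable

variable {G : Type*} [MeasurableSpace G] [Group G]

/-- Amenability of `G`: there is a positive, norm-one, left translation invariant
linear functional on `L^∞(G)`. -/
def HasLeftInvariantMean (μ : Measure G) : Prop :=
  ∃ Λ : Lp ℝ ⊤ μ →L[ℝ] ℝ, ‖Λ‖ = 1 ∧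
    (∀ f : Lp ℝ ⊤ μ, (∀ᵐ y ∂μ, 0 ≤ f y) → 0 ≤ Λ f) ∧
    ∀ (x : G) (f g : Lp ℝ ⊤ μ), (∀ᵐ y ∂μ, g y = f (x⁻¹ * y)) → Λ g = Λ f

end Amenable

/-- A normed space is weakly sequentially complete if every weakly Cauchy sequence
converges weakly. -/
def WeaklySequentiallyComplete (E : Type*) [NormedAddCommGroup E] [NormedSpace ℂ E] : Prop :=
  ∀ u : ℕ → E, (∀ T : StrongDual ℂ E, CauchySeq fun n => T (u n)) →
    ∃ x : E, ∀ T : StrongDual ℂ E, Tendsto (fun n => T (u n)) atTop (nhds (T x))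

section PF

variable {G : Type*} [MeasurableSpace G] [Group G] [TopologicalSpace G]

/-- The algebra of `Ψ`-pseudofunctions `PF_Ψ(G)`, realised inside `A_Φ(G)* = PM_Ψ(G)`:
the norm closure of the span of the functionals induced by `L¹(G)`-functions. -/
def PFSubmodule (μ : Measure G) {A : Type*} [NonUnitalNormedCommRing A]
    [NormedSpace ℂ A] (ι : A → C₀(G, ℂ)) : Submodule ℂ (StrongDual ℂ A) :=
  (Submodule.span ℂ {T | ∃ f : G → ℂ, Integrable f μ ∧
    ∀ a, T a = ∫ x, f x * ι a x ∂μ}).topologicalClosure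

end PF

/-! The annihilator `UCB^⊥` of `UCB_Ψ(Ĝ)` in `A**` is a right ideal for `□` with
`Λ □ Γ = 0` for all `Γ ∈ UCB^⊥` (because `Γ ⊙ T` pairs `Γ` with elements `u • T` of `UCB`).
So every `z ∈ UCB^⊥` is left quasi-regular with quasi-inverse `-z`, and `UCB^⊥` lies in the
radical. Semisimplicity makes `UCB^⊥ = 0`, and Hahn–Banach then gives `UCB_Ψ(Ĝ) = A*`. -/

theorem Submodule.eq_top_of_isClosed_of_forall_dual_eq_zero {𝕜 E : Type*} [RCLike 𝕜]
    [NormedAddCommGroup E] [NormedSpace 𝕜 E] {S : Submodule 𝕜 E} (hS : IsClosed (S : Set E))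
    (h : ∀ f : StrongDual 𝕜 E, (∀ x ∈ S, f x = 0) → f = 0) : S = ⊤ := by
  have : IsClosed (S : Set E) := hS
  refine S.eq_top_iff'.mpr fun x => (Submodule.Quotient.mk_eq_zero S).mp ?_
  refine SeparatingDual.eq_zero_of_forall_dual_eq_zero (R := 𝕜) fun g => ?_
  have hg : g.comp S.mkQL = 0 :=
    h _ fun y hy => by simp [(Submodule.Quotient.mk_eq_zero S).mpr hy]
  simpa using congr($hg x)

section ArensProduct

variable (A : Type*) [NonUnitalNormedRing A] [NormedSpace ℂ A]
  [SMulCommClass ℂ A A] [IsScalarTower ℂ A A]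

def ucbAnnihilator : Submodule ℂ (StrongDual ℂ (StrongDual ℂ A)) where
  carrier := {Γ | ∀ T ∈ UCBSubmodule A, Γ T = 0}
  add_mem' hΓ hΛ T hT := by simp [hΓ T hT, hΛ T hT]
  zero_mem' _ _ := rfl
  smul_mem' c Γ hΓ T hT := by simp [hΓ T hT]

variable {A}

theorem arensOdot_apply (Γ : StrongDual ℂ (StrongDual ℂ A)) (T : StrongDual ℂ A) (u : A) :
    arensOdot A Γ T u = Γ (dotAct A u T) := rfl

theorem arens_apply (Γ' Γ : StrongDual ℂ (StrongDual ℂ A)) (T : StrongDual ℂ A) :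
    arens A Γ' Γ T = Γ' (arensOdot A Γ T) := rfl

theorem dotAct_dotAct (u v : A) (S : StrongDual ℂ A) :
    dotAct A v (dotAct A u S) = dotAct A (u * v) S := by
  ext w
  simp [dotAct, mul_assoc]

theorem arensOdot_dotAct (Γ : StrongDual ℂ (StrongDual ℂ A)) (u : A) (S : StrongDual ℂ A) :
    arensOdot A Γ (dotAct A u S) = dotAct A u (arensOdot A Γ S) := by
  ext v
  simp only [arensOdot_apply, dotAct_dotAct]
  rfl

theorem arensOdot_eq_zero_of_mem_ucbAnnihilator {Γ : StrongDual ℂ (StrongDual ℂ A)}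
    (hΓ : Γ ∈ ucbAnnihilator A) : arensOdot A Γ = 0 := by
  ext T u
  exact hΓ _ (dotAct_mem_UCBSubmodule u T)

theorem arens_eq_zero_of_mem_ucbAnnihilator {Γ : StrongDual ℂ (StrongDual ℂ A)}
    (hΓ : Γ ∈ ucbAnnihilator A) (Λ : StrongDual ℂ (StrongDual ℂ A)) : arens A Λ Γ = 0 := by
  ext T
  rw [arens_apply, arensOdot_eq_zero_of_mem_ucbAnnihilator hΓ]
  exact map_zero Λ

theorem arens_mem_ucbAnnihilator {Γ : StrongDual ℂ (StrongDual ℂ A)}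
    (hΓ : Γ ∈ ucbAnnihilator A) (Λ : StrongDual ℂ (StrongDual ℂ A)) :
    arens A Γ Λ ∈ ucbAnnihilator A := by
  suffices UCBSubmodule A ≤ LinearMap.ker (arens A Γ Λ : StrongDual ℂ A →ₗ[ℂ] ℂ) from
    fun T hT => this hT
  refine Submodule.topologicalClosure_minimal _ ?_ (arens A Γ Λ).isClosed_ker
  rw [Submodule.span_le]
  rintro _ ⟨u, S, rfl⟩
  rw [SetLike.mem_coe, LinearMap.mem_ker, ContinuousLinearMap.coe_coe, arens_apply,
    arensOdot_dotAct]
  exact hΓ _ (dotAct_mem_UCBSubmodule u _)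

theorem memJacobsonRadicalWith_arens_of_mem_ucbAnnihilator
    {Γ : StrongDual ℂ (StrongDual ℂ A)} (hΓ : Γ ∈ ucbAnnihilator A) :
    MemJacobsonRadicalWith (arens A) Γ := by
  intro Λ n
  have hz : arens A Γ Λ + n • Γ ∈ ucbAnnihilator A :=
    add_mem (arens_mem_ucbAnnihilator hΓ Λ) (Submodule.smul_of_tower_mem _ n hΓ)
  refine ⟨-(arens A Γ Λ + n • Γ), ?_⟩
  rw [arens_eq_zero_of_mem_ucbAnnihilator hz]
  abel

end ArensProduct

variable {G : Type*} [Group G] [TopologicalSpace G] [IsTopologicalGroup G]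
  [LocallyCompactSpace G] [MeasurableSpace G] [BorelSpace G]

theorem ucb_eq_pm_of_aphi_bidual_semisimple_general
    (A : Type*) [NonUnitalNormedCommRing A] [NormedSpace ℂ A] [SMulCommClass ℂ A A]
    [IsScalarTower ℂ A A]
    (hss : IsSemisimpleWith (arens A)) :
    UCBSubmodule A = ⊤ :=
  Submodule.eq_top_of_isClosed_of_forall_dual_eq_zero
    (Submodule.isClosed_topologicalClosure _) fun Γ hΓ =>
      hss Γ (memJacobsonRadicalWith_arens_of_mem_ucbAnnihilator hΓ)

/-- If the Banach algebra `A_Φ(G)**` (first Arens product) is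
semi-simple, then `UCB_Ψ(Ĝ) = PM_Ψ(G)`. -/
theorem ucb_eq_pm_of_aphi_bidual_semisimple
    (μ : Measure G) [μ.IsHaarMeasure] (Φ Ψ : ℝ → ℝ)
    (hpair : IsComplementaryYoungPair Φ Ψ) (hΦΔ : HasDeltaTwo Φ) (hΨΔ : HasDeltaTwo Ψ)
    (A : Type*) [NonUnitalNormedCommRing A] [NormedSpace ℂ A] [SMulCommClass ℂ A A]
    [IsScalarTower ℂ A A] [CompleteSpace A] (ι : A → C₀(G, ℂ))
    (hA : IsOrliczFigaTalamancaHerzAlgebra μ Φ Ψ A ι)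
    (hss : IsSemisimpleWith (arens A)) :
    UCBSubmodule A = ⊤ :=
  ucb_eq_pm_of_aphi_bidual_semisimple_general A hss

end
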